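/- Let H be a symmetric positive definite n×n real matrix, φ > 0, and A an n×n real matrix satisfying H A + Aᵀ H ⪯ −2φ H (in the sense of symmetric matrices). Then for all t ≥ 0 and all v ∈ ℝⁿ, ‖e^{At} v‖ ≤ √(cond(H)) e^{−φ t} ‖v‖, where cond(H) = ‖H‖·‖H⁻¹‖ is the condition number of H in the operator 2-norm. -/

import Mathlib

open scoped Matrix

attribute [local instance] Matrix.linftyOpNormedRing Matrix.linftyOpNormedAlgebra

/-- The operator 2-norm of a real matrix, via its action on Euclidean space. -/
noncomputable def opNorm2 {n : ℕ} (M : Matrix (Fin n) (Fin n) ℝ) : ℝ :=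
  ‖Matrix.toEuclideanCLM (𝕜 := ℝ) M‖

/-!
With `S = √H`, the Loewner hypothesis says precisely that `V(x) = ‖S x‖² = ⟪x, H x⟫` satisfies
`V' ≤ -2φ V` along solutions of `x' = A x`, so Grönwall gives `‖S e^{tA} v‖ ≤ e^{-φt} ‖S v‖`.
Undoing `S` costs `‖S‖ ‖S⁻¹‖`, which equals `√(‖H‖ ‖H⁻¹‖)` by the C⋆-identity `‖S‖² = ‖S S‖`.
-/

open scoped RealInnerProductSpace

section Lyapunov

variable {E : Type*} [NormedAddCommGroup E] [InnerProductSpace ℝ E] [CompleteSpace E]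

theorem ContinuousLinearMap.hasDerivAt_exp_smul_apply (A : E →L[ℝ] E) (v : E) (s : ℝ) :
    HasDerivAt (fun u : ℝ => NormedSpace.exp (u • A) v) (A (NormedSpace.exp (s • A) v)) s := by
  simpa using (hasDerivAt_exp_smul_const' A s).clm_apply (hasDerivAt_const s v)

theorem le_mul_exp_of_hasDerivAt_le {f f' : ℝ → ℝ} {K : ℝ} (hf : ∀ s, HasDerivAt f (f' s) s)
    (hbound : ∀ s, f' s ≤ K * f s) {t : ℝ} (ht : 0 ≤ t) :
    f t ≤ f 0 * Real.exp (K * t) := by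
  have := le_gronwallBound_of_liminf_deriv_right_le (δ := f 0) (ε := 0) (a := 0) (b := t)
    (fun s _ => (hf s).continuousAt.continuousWithinAt)
    (fun s _ _ hr => (hf s).hasDerivWithinAt.liminf_right_slope_le hr) le_rfl
    (fun s _ => by rw [add_zero]; exact hbound s) t ⟨ht, le_rfl⟩
  rwa [sub_zero, gronwallBound_ε0] at this

theorem norm_apply_exp_smul_apply_le {A S : E →L[ℝ] E} {φ : ℝ}
    (hdiss : ∀ y, ⟪S (A y), S y⟫ ≤ -φ * ‖S y‖ ^ 2) {t : ℝ} (ht : 0 ≤ t) (v : E) :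
    ‖S (NormedSpace.exp (t • A) v)‖ ≤ Real.exp (-φ * t) * ‖S v‖ := by
  set x := fun s : ℝ => NormedSpace.exp (s • A) v
  have hderiv (s : ℝ) : HasDerivAt (fun s => ‖S (x s)‖ ^ 2) (2 * ⟪S (x s), S (A (x s))⟫) s :=
    (S.hasFDerivAt.comp_hasDerivAt s (A.hasDerivAt_exp_smul_apply v s)).norm_sq
  have hsq := le_mul_exp_of_hasDerivAt_le hderiv (K := -2 * φ)
    (fun s => by rw [real_inner_comm]; linarith [hdiss (x s)]) ht
  have hx0 : x 0 = v := by simp [x]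
  rw [hx0] at hsq
  refine le_of_pow_le_pow_left₀ two_ne_zero (by positivity) ?_
  calc ‖S (x t)‖ ^ 2 ≤ ‖S v‖ ^ 2 * Real.exp (-2 * φ * t) := hsq
    _ = (Real.exp (-φ * t) * ‖S v‖) ^ 2 := by
      rw [mul_pow, ← Real.exp_nat_mul]; ring_nf

theorem norm_exp_smul_apply_le_of_mul_eq_one {A S S' : E →L[ℝ] E} (hS : S' * S = 1) {φ : ℝ}
    (hdiss : ∀ y, ⟪S (A y), S y⟫ ≤ -φ * ‖S y‖ ^ 2) {t : ℝ} (ht : 0 ≤ t) (v : E) :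
    ‖NormedSpace.exp (t • A) v‖ ≤ ‖S‖ * ‖S'‖ * Real.exp (-φ * t) * ‖v‖ := by
  set x := NormedSpace.exp (t • A) v
  calc ‖x‖ = ‖S' (S x)‖ := by rw [← mul_apply_eq_comp, hS, one_apply_eq_self]
    _ ≤ ‖S'‖ * ‖S x‖ := S'.le_opNorm _
    _ ≤ ‖S'‖ * (Real.exp (-φ * t) * ‖S v‖) := by
      gcongr; exact norm_apply_exp_smul_apply_le hdiss ht v
    _ ≤ ‖S'‖ * (Real.exp (-φ * t) * (‖S‖ * ‖v‖)) := by gcongr; exact S.le_opNorm v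
    _ = ‖S‖ * ‖S'‖ * Real.exp (-φ * t) * ‖v‖ := by ring

theorem inner_apply_le_of_isPositive {A P S : E →L[ℝ] E} (hS : IsSelfAdjoint S)
    (hP : S * S = P) {φ : ℝ}
    (hLoewner : (-(P * A + ContinuousLinearMap.adjoint A * P + (2 * φ) • P)).IsPositive)
    (y : E) : ⟪S (A y), S y⟫ ≤ -φ * ‖S y‖ ^ 2 := by
  subst hP
  have := hLoewner.inner_nonneg_right y
  simp only [neg_apply, add_apply, mul_apply_eq_comp, smul_apply, inner_neg_right,
    inner_add_right, inner_smul_right, ContinuousLinearMap.adjoint_inner_right] at this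
  have hsym (a b : E) : ⟪a, S b⟫ = ⟪S a, b⟫ := (hS.isSymmetric a b).symm
  rw [hsym y, hsym (A y), hsym y, real_inner_comm (S (A y)), real_inner_self_eq_norm_sq]
    at this
  linarith

end Lyapunov

section Matrix

variable {ι : Type*} [Fintype ι] [DecidableEq ι]

theorem Matrix.toEuclideanCLM_exp (M : Matrix ι ι ℝ) :
    toEuclideanCLM (𝕜 := ℝ) (NormedSpace.exp M) = NormedSpace.exp (toEuclideanCLM (𝕜 := ℝ) M) :=
  NormedSpace.map_exp (toEuclideanCLM (𝕜 := ℝ) (n := ι))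
    (LinearMap.continuous_of_finiteDimensional
      (toEuclideanCLM (𝕜 := ℝ) (n := ι)).toAlgEquiv.toLinearMap) M

theorem Matrix.toEuclideanCLM_transpose (M : Matrix ι ι ℝ) :
    toEuclideanCLM (𝕜 := ℝ) Mᵀ = ContinuousLinearMap.adjoint (toEuclideanCLM (𝕜 := ℝ) M) := by
  rw [← ContinuousLinearMap.star_eq_adjoint, ← map_star, star_eq_conjTranspose,
    conjTranspose_eq_transpose_of_trivial]

theorem Matrix.isPositive_toEuclideanCLM_iff {M : Matrix ι ι ℝ} :
    (toEuclideanCLM (𝕜 := ℝ) M).IsPositive ↔ M.PosSemidef := by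
  rw [← ContinuousLinearMap.isPositive_toLinearMap_iff, coe_toEuclideanCLM_eq_toEuclideanLin,
    isPositive_toEuclideanLin_iff]

open scoped MatrixOrder in
theorem Matrix.PosDef.exists_isHermitian_isUnit_mul_self_eq {H : Matrix ι ι ℝ}
    (hH : H.PosDef) :
    ∃ S : Matrix ι ι ℝ, S.IsHermitian ∧ IsUnit S ∧ S * S = H :=
  ⟨CFC.sqrt H, (nonneg_iff_posSemidef.mp (CFC.sqrt_nonneg H)).isHermitian,
    (CFC.isUnit_sqrt_iff H).mpr hH.isUnit, CFC.sqrt_mul_sqrt_self H hH.posSemidef.nonneg⟩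

end Matrix

theorem opNorm2_mul_self {n : ℕ} {S : Matrix (Fin n) (Fin n) ℝ} (hS : S.IsHermitian) :
    opNorm2 (S * S) = opNorm2 S ^ 2 := by
  rw [opNorm2, opNorm2, map_mul]
  exact (hS.isSelfAdjoint.map _).norm_mul_self

theorem opNorm2_nonneg {n : ℕ} (M : Matrix (Fin n) (Fin n) ℝ) : 0 ≤ opNorm2 M :=
  norm_nonneg _

theorem stmt6_general {n : ℕ} (H A : Matrix (Fin n) (Fin n) ℝ) (hH : H.PosDef)
    {φ : ℝ}
    (hLoewner : (-(H * A + Aᵀ * H + (2 * φ) • H)).PosSemidef) :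
    ∀ t : ℝ, 0 ≤ t → ∀ v : EuclideanSpace ℝ (Fin n),
      ‖Matrix.toEuclideanCLM (𝕜 := ℝ) (NormedSpace.exp (t • A)) v‖ ≤
        Real.sqrt (opNorm2 H * opNorm2 H⁻¹) * Real.exp (-φ * t) * ‖v‖ := by
  intro t ht v
  set T := Matrix.toEuclideanCLM (𝕜 := ℝ) (n := Fin n)
  obtain ⟨S, hS, hSunit, hSS⟩ := hH.exists_isHermitian_isUnit_mul_self_eq
  have hSinv : S⁻¹ * S = 1 :=
    Matrix.nonsing_inv_mul S ((Matrix.isUnit_iff_isUnit_det S).mp hSunit)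
  have hTLoewner :
      (-(T H * T A + ContinuousLinearMap.adjoint (T A) * T H + (2 * φ) • T H)).IsPositive := by
    simpa only [map_neg, map_add, map_mul, map_smul, Matrix.toEuclideanCLM_transpose]
      using Matrix.isPositive_toEuclideanCLM_iff.mpr hLoewner
  have hdiss : ∀ y, ⟪T S (T A y), T S y⟫ ≤ -φ * ‖T S y‖ ^ 2 :=
    inner_apply_le_of_isPositive (hS.isSelfAdjoint.map T) (by rw [← map_mul, hSS]) hTLoewner
  have hcond : √(opNorm2 H * opNorm2 H⁻¹) = opNorm2 S * opNorm2 S⁻¹ := by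
    rw [← hSS, Matrix.mul_inv_rev, opNorm2_mul_self hS, opNorm2_mul_self hS.inv, ← mul_pow,
      Real.sqrt_sq (mul_nonneg (opNorm2_nonneg _) (opNorm2_nonneg _))]
  rw [Matrix.toEuclideanCLM_exp, map_smul, hcond]
  exact norm_exp_smul_apply_le_of_mul_eq_one (by rw [← map_mul, hSinv, map_one]) hdiss ht v

/-- If `H A + Aᵀ H ⪯ -2φ H` with `H` symmetric positive definite and `φ > 0`, then
`‖e^{At} v‖ ≤ √(cond H) e^{-φt} ‖v‖` for all `t ≥ 0`, where `cond H = ‖H‖ ‖H⁻¹‖`. -/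
theorem stmt6 {n : ℕ} (H A : Matrix (Fin n) (Fin n) ℝ) (hH : H.PosDef)
    {φ : ℝ} (hφ : 0 < φ)
    (hLoewner : (-(H * A + Aᵀ * H + (2 * φ) • H)).PosSemidef) :
    ∀ t : ℝ, 0 ≤ t → ∀ v : EuclideanSpace ℝ (Fin n),
      ‖Matrix.toEuclideanCLM (𝕜 := ℝ) (NormedSpace.exp (t • A)) v‖ ≤
        Real.sqrt (opNorm2 H * opNorm2 H⁻¹) * Real.exp (-φ * t) * ‖v‖ :=
  stmt6_general H A hH hLoewner
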